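/- arXiv:2603.17939 — 7 statements merged into one kernel-verified Lean document; each statement's English description precedes it below -/
import Mathlib

section
/- Let n be a natural number and write ℂⁿ for EuclideanSpace ℂ (Fin n), with star z denoting componentwise complex conjugation. Let g : ℂⁿ → ℂⁿ be holomorphic (Fréchet ℂ-differentiable everywhere) and define the antiholomorphic map σ : ℂⁿ → ℂⁿ by σ(z) = g(star z). Let ψ : ℂⁿ → ℝ be of class C² (ContDiff ℝ 2) and plurisubharmonic in the Hessian sense: for every a, v ∈ ℂⁿ, the function t ↦ ψ(a + t • v) on ℂ has nonnegative Laplacian at 0. Then u = ψ ∘ σ is of class C² and is plurisubharmonic in the same Hessian sense: for every a, v ∈ ℂⁿ, the function t ↦ u(a + t • v) has nonnegative Laplacian at 0. -/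
/-!
Along a complex line, `u = ψ ∘ σ` is `t ↦ ψ (G (conj t))` with `G s = g (conj a + s • conj v)`
holomorphic, and the Laplacian at `0` is unchanged by `t ↦ conj t`. For holomorphic `G` the
second-order chain rule gives, in the direction `s`,
`D²ψ(G 0)(s G'(0), s G'(0)) + Dψ(G 0)(s² G''(0))`; the first-order terms for `s = 1` and `s = i`
cancel, so `Δ(ψ ∘ G)(0)` is the Laplacian of `ψ` along the tangent line `t ↦ G 0 + t G'(0)`,
which is nonnegative.

The regularity of `g` comes from the Cauchy formula
`Dg(z) w = (2π)⁻¹ ∫₀^{2π} e^{-iθ} g(z + e^{iθ} w) dθ`, which expresses each directional derivative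
as a parametric integral of `g` itself: `g` is `C⁰`, hence `C¹`, hence `C²`.
-/

open Complex

/-- The Laplacian at `0` of a function `h : ℂ → ℝ`, computed from the second real
Fréchet derivative: `D²h(0)(1,1) + D²h(0)(i,i)`. -/
noncomputable def laplacianAtZero (h : ℂ → ℝ) : ℝ :=
  iteratedFDeriv ℝ 2 h 0 ![1, 1] + iteratedFDeriv ℝ 2 h 0 ![Complex.I, Complex.I]

/-- Componentwise complex conjugation on `ℂⁿ`. -/
def conjVec {n : ℕ} (z : EuclideanSpace ℂ (Fin n)) : EuclideanSpace ℂ (Fin n) :=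
  WithLp.toLp 2 fun i => starRingEnd ℂ (z i)

open ComplexConjugate Metric Set Real

section ParametricIntegral
variable {E F : Type*} [NormedAddCommGroup F] [NormedSpace ℂ F] {k : ℝ → ℂ} {a b : ℝ}

theorem continuous_intervalIntegral_smul_comp_add [TopologicalSpace E] [Add E] [ContinuousAdd E]
    {p : ℝ → E} (hk : Continuous k) (hp : Continuous p) {f : E → F} (hf : Continuous f) :
    Continuous fun z => ∫ θ in a..b, k θ • f (z + p θ) :=
  intervalIntegral.continuous_parametric_intervalIntegral_of_continuous' (by fun_prop) a b

variable [NormedAddCommGroup E] [NormedSpace ℂ E] [ProperSpace E] {p : ℝ → E}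

theorem hasFDerivAt_intervalIntegral_smul_comp_add (hk : Continuous k) (hp : Continuous p)
    {f : E → F} (hf : ContDiff ℂ 1 f) (z₀ : E) :
    HasFDerivAt (fun z => ∫ θ in a..b, k θ • f (z + p θ))
      (∫ θ in a..b, k θ • fderiv ℂ f (z₀ + p θ)) z₀ := by
  have hf' : Continuous (fderiv ℂ f) := hf.continuous_fderiv one_ne_zero
  have hdf : Differentiable ℂ f := hf.differentiable one_ne_zero
  obtain ⟨C, hC⟩ := ((isCompact_closedBall z₀ 1).prod isCompact_uIcc).exists_bound_of_continuousOn
    (f := fun q : E × ℝ => k q.2 • fderiv ℂ f (q.1 + p q.2)) (by fun_prop)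
  refine intervalIntegral.hasFDerivAt_integral_of_dominated_of_fderiv_le
    (F := fun z θ => k θ • f (z + p θ)) (F' := fun z θ => k θ • fderiv ℂ f (z + p θ))
    (bound := fun _ => C) (closedBall_mem_nhds z₀ one_pos)
    (.of_forall fun z => (by fun_prop : Continuous _).aestronglyMeasurable)
    ((by fun_prop : Continuous _).intervalIntegrable _ _)
    (by fun_prop : Continuous _).aestronglyMeasurable ?_ intervalIntegrable_const ?_
  · exact .of_forall fun θ hθ z hz => hC (z, θ) ⟨hz, uIoc_subset_uIcc hθ⟩
  · exact .of_forall fun θ _ z _ =>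
      ((hasFDerivAt_comp_add_right (p θ)).2 (hdf _).hasFDerivAt).const_smul (k θ)

theorem contDiff_one_intervalIntegral_smul_comp_add (hk : Continuous k) (hp : Continuous p)
    {f : E → F} (hf : ContDiff ℂ 1 f) :
    ContDiff ℂ 1 fun z => ∫ θ in a..b, k θ • f (z + p θ) := by
  have hderiv := hasFDerivAt_intervalIntegral_smul_comp_add (a := a) (b := b) hk hp hf
  rw [contDiff_one_iff_fderiv, funext fun z => (hderiv z).fderiv]
  exact ⟨fun z => (hderiv z).differentiableAt,
    continuous_intervalIntegral_smul_comp_add hk hp (hf.continuous_fderiv one_ne_zero)⟩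

end ParametricIntegral

section CauchyFormula
variable {E F : Type*} [NormedAddCommGroup E] [NormedSpace ℂ E]
  [NormedAddCommGroup F] [NormedSpace ℂ F] [CompleteSpace F]

theorem fderiv_apply_eq_intervalIntegral {f : E → F} (hf : Differentiable ℂ f) (z w : E) :
    fderiv ℂ f z w = ∫ θ in 0..2 * π,
      ((2 * π : ℂ)⁻¹ * circleMap 0 1 (-θ)) • f (z + circleMap 0 1 θ • w) := by
  have hline (t : ℂ) : HasDerivAt (fun l : ℂ => f (z + l • w)) (fderiv ℂ f (z + t • w) w) t := by
    have := (hf _).hasFDerivAt.comp_hasDerivAt t (((hasDerivAt_id t).smul_const w).const_add z)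
    simpa [Function.comp_def] using this
  have hcauchy := Differentiable.diffContOnCl (fun t => (hline t).differentiableAt)
    |>.deriv_eq_smul_circleIntegral (c := 0) one_pos
  have hderiv : deriv (fun l : ℂ => f (z + l • w)) 0 = fderiv ℂ f z w := by
    simpa using (hline 0).deriv
  rw [← hderiv, (eq_inv_smul_iff₀ two_pi_I_ne_zero).2 hcauchy.symm,
    circleIntegral, ← intervalIntegral.integral_smul]
  refine intervalIntegral.integral_congr fun θ _ => ?_
  simp only [smul_smul, deriv_circleMap, sub_zero]
  have hinv : circleMap 0 1 (-θ) = (circleMap 0 1 θ)⁻¹ := by simp [circleMap_zero_inv]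
  rw [hinv]
  congr 1
  field_simp

theorem Differentiable.contDiff_two_of_finiteDimensional [FiniteDimensional ℂ E] {f : E → F}
    (hf : Differentiable ℂ f) : ContDiff ℂ 2 f := by
  have hk : Continuous fun θ : ℝ => (2 * π : ℂ)⁻¹ * circleMap 0 1 (-θ) := by fun_prop
  have hp : ∀ w : E, Continuous fun θ => circleMap 0 1 θ • w := fun w => by fun_prop
  have hrep (w : E) := funext (fderiv_apply_eq_intervalIntegral hf · w)
  have hC1 : ContDiff ℂ 1 f := by
    rw [← zero_add 1, contDiff_succ_iff_fderiv_apply]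
    refine ⟨hf, by simp, fun w => ?_⟩
    rw [hrep w, contDiff_zero]
    exact continuous_intervalIntegral_smul_comp_add hk (hp w) hf.continuous
  rw [show (2 : WithTop ℕ∞) = 1 + 1 from rfl, contDiff_succ_iff_fderiv_apply]
  refine ⟨hf, by simp, fun w => ?_⟩
  rw [hrep w]
  exact contDiff_one_intervalIntegral_smul_comp_add hk (hp w) hC1

end CauchyFormula

section SecondDerivative
variable {E F : Type*} [NormedAddCommGroup E] [NormedSpace ℝ E] [NormedAddCommGroup F]
  [NormedSpace ℝ F]

theorem iteratedFDeriv_two_apply_const_eq_iteratedDeriv {h : E → F} {x : E}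
    (hh : ContDiffAt ℝ 2 h x) (y : E) :
    iteratedFDeriv ℝ 2 h x (fun _ => y) = iteratedDeriv 2 (fun r : ℝ => h (x + r • y)) 0 := by
  have hline : ContDiffAt ℝ 2 (fun r : ℝ => x + r • y) 0 := by fun_prop
  have hderiv : deriv (fun r : ℝ => r • y) = fun _ => y :=
    funext fun r => by simpa using ((hasDerivAt_id r).smul_const y).deriv
  rw [← Function.comp_def h, iteratedDeriv_vcomp_two (by simpa using hh) hline]
  simp [iteratedDeriv_succ, hderiv]

end SecondDerivative

section HolomorphicCurve
variable {E : Type*} [NormedAddCommGroup E] [NormedSpace ℂ E]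

theorem hasDerivAt_comp_ofReal_mul {G : ℂ → E} {r : ℝ} {s : ℂ}
    (hG : DifferentiableAt ℂ G (r * s)) :
    HasDerivAt (fun r : ℝ => G (r * s)) (s • deriv G (r * s)) r :=
  hG.hasDerivAt.scomp r (ofRealCLM.hasDerivAt.mul_const s |>.congr_deriv (by simp))

variable [CompleteSpace E]

theorem iteratedDeriv_two_comp_ofReal_mul {G : ℂ → E} (hG : Differentiable ℂ G) (r : ℝ)
    (s : ℂ) :
    iteratedDeriv 2 (fun r : ℝ => G (r * s)) r = s ^ 2 • iteratedDeriv 2 G (r * s) := by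
  have hderiv : deriv (fun r : ℝ => G (r * s)) = fun r : ℝ => s • deriv G (r * s) :=
    funext fun r => (hasDerivAt_comp_ofReal_mul (hG _)).deriv
  rw [iteratedDeriv_succ, iteratedDeriv_one, hderiv,
    ((hasDerivAt_comp_ofReal_mul (hG.deriv _)).fun_const_smul s).deriv, smul_smul, sq,
    iteratedDeriv_succ, iteratedDeriv_one]

end HolomorphicCurve

section Laplacian
variable {E : Type*} [NormedAddCommGroup E] [NormedSpace ℂ E] [CompleteSpace E]

theorem laplacianAtZero_eq (h : ℂ → ℝ) :
    laplacianAtZero h =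
      iteratedFDeriv ℝ 2 h 0 (fun _ => 1) + iteratedFDeriv ℝ 2 h 0 (fun _ => I) := by
  have hdiag (s : ℂ) : ![s, s] = fun _ => s := by ext i; fin_cases i <;> rfl
  rw [laplacianAtZero, hdiag, hdiag]

theorem iteratedFDeriv_two_comp_holomorphic_apply_const {ψ : E → ℝ} (hψ : ContDiff ℝ 2 ψ)
    {G : ℂ → E} (hG : Differentiable ℂ G) (s : ℂ) :
    iteratedFDeriv ℝ 2 (ψ ∘ G) 0 (fun _ => s) =
      iteratedFDeriv ℝ 2 ψ (G 0) (fun _ => s • deriv G 0) +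
        fderiv ℝ ψ (G 0) (s ^ 2 • iteratedDeriv 2 G 0) := by
  have hGℝ : ContDiff ℝ 2 G := hG.contDiff.restrict_scalars ℝ
  have hγ : ContDiff ℝ 2 fun r : ℝ => G (r * s) :=
    hGℝ.comp (ofRealCLM.contDiff.mul contDiff_const)
  have hslice : (fun r : ℝ => (ψ ∘ G) (0 + r • s)) = ψ ∘ fun r : ℝ => G (r * s) := by
    funext r; simp [Complex.real_smul]
  rw [iteratedFDeriv_two_apply_const_eq_iteratedDeriv (hψ.comp hGℝ).contDiffAt, hslice,
    iteratedDeriv_vcomp_two hψ.contDiffAt hγ.contDiffAt, iteratedDeriv_two_comp_ofReal_mul hG,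
    (hasDerivAt_comp_ofReal_mul (hG _)).deriv]
  simp

theorem laplacianAtZero_comp_holomorphic {ψ : E → ℝ} (hψ : ContDiff ℝ 2 ψ) {G : ℂ → E}
    (hG : Differentiable ℂ G) :
    laplacianAtZero (ψ ∘ G) = iteratedFDeriv ℝ 2 ψ (G 0) (fun _ => deriv G 0) +
      iteratedFDeriv ℝ 2 ψ (G 0) (fun _ => I • deriv G 0) := by
  rw [laplacianAtZero_eq, iteratedFDeriv_two_comp_holomorphic_apply_const hψ hG,
    iteratedFDeriv_two_comp_holomorphic_apply_const hψ hG]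
  simp only [one_smul, one_pow, I_sq, neg_smul, map_neg]
  abel

theorem laplacianAtZero_comp_holomorphic_eq_line {ψ : E → ℝ} (hψ : ContDiff ℝ 2 ψ) {G : ℂ → E}
    (hG : Differentiable ℂ G) :
    laplacianAtZero (ψ ∘ G) = laplacianAtZero fun t => ψ (G 0 + t • deriv G 0) := by
  have hline :=
    laplacianAtZero_comp_holomorphic hψ (G := fun t => G 0 + t • deriv G 0) (by fun_prop)
  have hv : deriv (fun t : ℂ => t • deriv G 0) 0 = deriv G 0 := by
    simpa using ((hasDerivAt_id (0 : ℂ)).smul_const (deriv G 0)).deriv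
  simp only [zero_smul, add_zero, deriv_const_add', hv] at hline
  rw [laplacianAtZero_comp_holomorphic hψ hG, ← hline, Function.comp_def]

theorem laplacianAtZero_comp_conj {h : ℂ → ℝ} (hh : ContDiff ℝ 2 h) :
    laplacianAtZero (fun t => h (conj t)) = laplacianAtZero h := by
  have hcomp (s : ℂ) : iteratedFDeriv ℝ 2 (fun t => h (conj t)) 0 (fun _ => s) =
      iteratedFDeriv ℝ 2 h 0 (fun _ => conj s) := by
    simpa [Function.comp_def] using congrArg (· fun _ => s)
      (conjCLE.toContinuousLinearMap.iteratedFDeriv_comp_right hh 0 le_rfl)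
  rw [laplacianAtZero_eq, laplacianAtZero_eq, hcomp, hcomp, conj_I, map_one]
  have hneg := (iteratedFDeriv ℝ 2 h 0).map_smul_univ (fun _ => (-1 : ℝ)) (fun _ => I)
  simp only [neg_smul, one_smul, Finset.prod_const, Finset.card_univ, Fintype.card_fin] at hneg
  rw [hneg]
  norm_num

end Laplacian

theorem contDiff_conjVec {n : ℕ} {m : WithTop ℕ∞} : ContDiff ℝ m (conjVec (n := n)) :=
  (contDiff_piLp 2).2 fun i => conjCLE.contDiff.comp (contDiff_piLp_apply 2 (i := i))

theorem conjVec_add_smul {n : ℕ} (a v : EuclideanSpace ℂ (Fin n)) (t : ℂ) :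
    conjVec (a + t • v) = conjVec a + conj t • conjVec v := by
  ext i
  simp [conjVec]

/-- If `ψ` is a `C²` plurisubharmonic function (in the Hessian/Laplacian sense) on `ℂⁿ`
and `σ(z) = g(star z)` is antiholomorphic (with `g` holomorphic), then `ψ ∘ σ` is `C²`
and plurisubharmonic. -/
theorem psh_comp_antiholomorphic (n : ℕ)
    (g : EuclideanSpace ℂ (Fin n) → EuclideanSpace ℂ (Fin n))
    (hg : ∀ z, DifferentiableAt ℂ g z)
    (σ : EuclideanSpace ℂ (Fin n) → EuclideanSpace ℂ (Fin n))
    (hσ : ∀ z, σ z = g (conjVec z))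
    (ψ : EuclideanSpace ℂ (Fin n) → ℝ) (hψ : ContDiff ℝ 2 ψ)
    (hpsh : ∀ a v : EuclideanSpace ℂ (Fin n),
      0 ≤ laplacianAtZero fun t : ℂ => ψ (a + t • v)) :
    ContDiff ℝ 2 (ψ ∘ σ) ∧
      ∀ a v : EuclideanSpace ℂ (Fin n),
        0 ≤ laplacianAtZero fun t : ℂ => (ψ ∘ σ) (a + t • v) := by
  have hgℂ : Differentiable ℂ g := hg
  obtain rfl : σ = g ∘ conjVec := funext hσ
  refine ⟨hψ.comp ((hgℂ.contDiff_two_of_finiteDimensional.restrict_scalars ℝ).comp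
    contDiff_conjVec), fun a v => ?_⟩
  set G : ℂ → EuclideanSpace ℂ (Fin n) := fun s => g (conjVec a + s • conjVec v)
  have hG : Differentiable ℂ G := hgℂ.comp (by fun_prop)
  have hslice : (fun t : ℂ => (ψ ∘ g ∘ conjVec) (a + t • v)) = fun t => (ψ ∘ G) (conj t) := by
    funext t
    simp [G, conjVec_add_smul]
  rw [hslice, laplacianAtZero_comp_conj (hψ.comp (hG.contDiff.restrict_scalars ℝ)),
    laplacianAtZero_comp_holomorphic_eq_line hψ hG]
  exact hpsh _ _
end

section
/- Let l > 0 be a real number and let T_l : ℍ → ℍ be the glide reflection T_l(z) = e^l · (−conj(z)) of the upper half-plane. Then for every z ∈ ℍ, the hyperbolic displacement satisfies dist(z, T_l z) ≥ l, and equality dist(z, T_l z) = l holds if and only if Re z = 0. In other words, the displacement function of T_l attains its minimum value l exactly on the imaginary axis. -/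
open UpperHalfPlane Complex

/-- The glide reflection `z ↦ e^l · (−conj z)` of the upper half-plane. -/
noncomputable def glide (l : ℝ) (z : ℍ) : ℍ :=
  UpperHalfPlane.mk (Real.exp l * (-(starRingEnd ℂ) (z : ℂ)))
    (by
      simp only [Complex.mul_im, Complex.neg_im, Complex.neg_re, Complex.conj_im,
        Complex.conj_re, Complex.ofReal_re, Complex.ofReal_im, neg_neg, zero_mul,
        mul_zero, add_zero, zero_add, neg_zero]
      exact mul_pos (Real.exp_pos l) z.im_pos)

/-!
Writing `z = x + iy`, the formula `cosh d(z, w) = ((Re z - Re w)² + (Im z)² + (Im w)²) / (2 Im z Im w)`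
gives `cosh d(z, T_l z) = cosh l + (1 + cosh l) (x / y)²`. Since `cosh` is strictly increasing
on `[0, ∞)`, the displacement is at least `l`, with equality exactly when `x = 0`.
-/

@[simp]
theorem glide_re (l : ℝ) (z : ℍ) : (glide l z).re = -(Real.exp l * z.re) := by
  simp [← coe_re, glide, Complex.exp_ofReal_re]

@[simp]
theorem glide_im (l : ℝ) (z : ℍ) : (glide l z).im = Real.exp l * z.im := by
  simp [← coe_im, glide, Complex.exp_ofReal_re]

theorem cosh_dist_glide (l : ℝ) (z : ℍ) :
    Real.cosh (dist z (glide l z)) = Real.cosh l + (1 + Real.cosh l) * (z.re / z.im) ^ 2 := by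
  have hy : z.im ≠ 0 := z.im_pos.ne'
  rw [cosh_dist', glide_re, glide_im, Real.cosh_eq, Real.exp_neg]
  field_simp
  ring

/-- For `l > 0`, the hyperbolic displacement of the glide reflection `T_l` is at least
`l` everywhere, with equality exactly on the imaginary axis. -/
theorem glide_displacement_min (l : ℝ) (hl : 0 < l) :
    ∀ z : ℍ, l ≤ dist z (glide l z) ∧ (dist z (glide l z) = l ↔ z.re = 0) := by
  intro z
  have hl' : l ∈ Set.Ici 0 := hl.le
  have hd : dist z (glide l z) ∈ Set.Ici 0 := dist_nonneg
  have hcoef : 0 < 1 + Real.cosh l := by linarith [Real.one_le_cosh l]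
  rw [← Real.cosh_strictMonoOn.le_iff_le hl' hd, ← Real.cosh_injOn.eq_iff hd hl',
    cosh_dist_glide]
  refine ⟨le_add_of_nonneg_right (by positivity), ?_⟩
  simp [hcoef.ne', z.im_pos.ne']
end

section
/- Let E be a finite-dimensional real inner product space, let M : E ≃ₗᵢ[ℝ] E be a linear isometry equivalence, let c ∈ E, and define the affine isometry f : E → E by f(x) = M x + c. Let K = {v ∈ E : M v = v} be the fixed subspace of M and let P_K denote the orthogonal projection of E onto K. Then the infimum of the displacement ‖f x − x‖ over x ∈ E equals ‖P_K c‖, and this infimum is attained: there exists x₀ ∈ E with ‖f x₀ − x₀‖ = ‖P_K c‖, while ‖f x − x‖ ≥ ‖P_K c‖ for every x ∈ E. In particular every affine isometry of a finite-dimensional Euclidean space is semisimple (its displacement function attains its minimum). -/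
/-!
Write `f x - x = (M - 1) x + c`. For a linear isometry `M`, the range of `M - 1` is orthogonal
to the fixed subspace `K`, and in finite dimension it is all of `Kᗮ`. Hence projecting onto `K`
kills `(M - 1) x`, so `‖f x - x‖ ≥ ‖P_K c‖`, and choosing `x` with `(M - 1) x = P_K c - c`
gives equality.
-/

open Submodule InnerProductSpace

namespace LinearIsometry

variable {𝕜 E : Type*} [RCLike 𝕜] [NormedAddCommGroup E] [InnerProductSpace 𝕜 E]

theorem orthogonal_range_sub_id (T : E →ₗᵢ[𝕜] E) :
    (LinearMap.range (T.toLinearMap - LinearMap.id))ᗮ =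
      LinearMap.ker (T.toLinearMap - LinearMap.id) := by
  ext v
  rw [mem_orthogonal, LinearMap.mem_ker]
  constructor
  · intro h
    have hinner : ⟪T v - v, v⟫_𝕜 = 0 := h _ (LinearMap.mem_range_self _ v)
    rw [inner_sub_left, sub_eq_zero] at hinner
    have hfix : T v = v := eq_of_norm_le_re_inner_eq_norm_sq (T.norm_map v).le
      (by rw [hinner, inner_self_eq_norm_sq])
    exact sub_eq_zero.mpr hfix
  · rintro hv _ ⟨x, rfl⟩
    replace hv : T v = v := sub_eq_zero.mp hv
    change ⟪T x - x, v⟫_𝕜 = 0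
    rw [inner_sub_left, ← hv, T.inner_map_map, hv, sub_self]

theorem range_sub_id_eq_orthogonal_ker [FiniteDimensional 𝕜 E] (T : E →ₗᵢ[𝕜] E) :
    LinearMap.range (T.toLinearMap - LinearMap.id) =
      (LinearMap.ker (T.toLinearMap - LinearMap.id))ᗮ := by
  rw [← T.orthogonal_range_sub_id, orthogonal_orthogonal]

end LinearIsometry

theorem Submodule.norm_starProjection_le_norm_add_of_mem_orthogonal
    {𝕜 E : Type*} [RCLike 𝕜] [NormedAddCommGroup E] [InnerProductSpace 𝕜 E]
    (K : Submodule 𝕜 E) [K.HasOrthogonalProjection] {y : E} (hy : y ∈ Kᗮ) (c : E) :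
    ‖K.starProjection c‖ ≤ ‖y + c‖ := by
  have hproj : K.starProjection (y + c) = K.starProjection c := by
    rw [map_add, (starProjection_apply_eq_zero_iff (K := K)).2 hy, zero_add]
  exact hproj ▸ K.norm_starProjection_apply_le (y + c)

/-- Every affine isometry `f(x) = M x + c` of a finite-dimensional Euclidean space is
semisimple: its displacement function `x ↦ ‖f x − x‖` attains its infimum, which
equals the norm of the orthogonal projection of `c` onto the fixed subspace
`K = ker (M − id)` of `M`. -/
theorem affineIsometry_displacement_min
    {E : Type*} [NormedAddCommGroup E] [InnerProductSpace ℝ E] [FiniteDimensional ℝ E]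
    (M : E ≃ₗᵢ[ℝ] E) (c : E) (f : E → E) (hf : ∀ x, f x = M x + c)
    (K : Submodule ℝ E) (hK : K = LinearMap.ker ((M.toLinearEquiv : E →ₗ[ℝ] E) - LinearMap.id)) :
    (∃ x₀ : E, ‖f x₀ - x₀‖ = ‖(Submodule.orthogonalProjection K c : E)‖) ∧
      ∀ x : E, ‖(Submodule.orthogonalProjection K c : E)‖ ≤ ‖f x - x‖ := by
  set A : E →ₗ[ℝ] E := (M.toLinearEquiv : E →ₗ[ℝ] E) - LinearMap.id
  have hrange : LinearMap.range A = Kᗮ :=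
    hK ▸ M.toLinearIsometry.range_sub_id_eq_orthogonal_ker
  have hdisp : ∀ x, f x - x = A x + c := fun x => by
    rw [hf]
    change M x + c - x = (M x - x) + c
    abel
  refine ⟨?_, fun x => ?_⟩
  · obtain ⟨y, hy⟩ : c - K.starProjection c ∈ LinearMap.range A :=
      hrange ▸ K.sub_starProjection_mem_orthogonal c
    refine ⟨-y, ?_⟩
    rw [hdisp, map_neg, hy, neg_sub, sub_add_cancel]
    rfl
  · rw [hdisp]
    exact K.norm_starProjection_le_norm_add_of_mem_orthogonal
      (hrange ▸ LinearMap.mem_range_self A x) c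
end

section
/- Let E be a finite-dimensional real inner product space, let M : E ≃ₗᵢ[ℝ] E be a linear isometry equivalence, let c ∈ E, and define the affine isometry f : E → E by f(x) = M x + c. Let K = {v ∈ E : M v = v} and let p = P_K c be the orthogonal projection of c onto K. Then the Min-Set of f, namely Min(f) = {x ∈ E : ∀ y ∈ E, ‖f x − x‖ ≤ ‖f y − y‖}, equals the set {x ∈ E : M x − x = p − c}; this set is nonempty, and it is an affine subspace of E whose direction is exactly K (i.e. if x ∈ Min(f) then x + v ∈ Min(f) if and only if v ∈ K). Moreover f acts on Min(f) as the translation by p: for every x ∈ Min(f), f(x) = x + p; in particular f maps Min(f) onto itself. -/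
/-!
Write `T = M - id` and `K = ker T`. Since `M` preserves inner products, `range T ⊥ K`, and a
dimension count gives `range T = Kᗮ`. Splitting `c = p + (c - p)` along `K ⊕ Kᗮ`, the displacement
`f x - x = (T x - (p - c)) + p` is an orthogonal sum, so `‖f x - x‖² = ‖T x - (p - c)‖² + ‖p‖²`.
As `p - c ∈ Kᗮ = range T`, the minimum `‖p‖` is attained, exactly where `T x = p - c`.
-/

namespace LinearIsometryEquiv

variable {E : Type*} [NormedAddCommGroup E] [InnerProductSpace ℝ E] (M : E ≃ₗᵢ[ℝ] E)

def fixedSubspace : Submodule ℝ E :=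
  LinearMap.ker ((M.toLinearEquiv : E →ₗ[ℝ] E) - LinearMap.id)

@[simp]
theorem mem_fixedSubspace {v : E} : v ∈ M.fixedSubspace ↔ M v = v := by
  simp [fixedSubspace, sub_eq_zero]

theorem apply_sub_self_mem_orthogonal_fixedSubspace (x : E) : M x - x ∈ M.fixedSubspaceᗮ := by
  rw [Submodule.mem_orthogonal]
  intro v hv
  have h := M.inner_map_map v x
  rw [(M.mem_fixedSubspace).1 hv] at h
  rw [inner_sub_right, h, sub_self]

theorem exists_apply_sub_self_eq [FiniteDimensional ℝ E] {w : E} (hw : w ∈ M.fixedSubspaceᗮ) :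
    ∃ x, M x - x = w := by
  set T : E →ₗ[ℝ] E := (M.toLinearEquiv : E →ₗ[ℝ] E) - LinearMap.id
  have hle : LinearMap.range T ≤ M.fixedSubspaceᗮ := by
    rintro _ ⟨x, rfl⟩
    exact M.apply_sub_self_mem_orthogonal_fixedSubspace x
  have hrange : LinearMap.range T = M.fixedSubspaceᗮ := by
    refine Submodule.eq_of_le_of_finrank_eq hle ?_
    change _ = Module.finrank ℝ (LinearMap.ker T)ᗮ
    have := LinearMap.finrank_range_add_finrank_ker T
    have := (LinearMap.ker T).finrank_add_finrank_orthogonal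
    omega
  rw [← hrange] at hw
  exact hw

theorem apply_add_sub_add_eq_iff {x w : E} (hx : M x - x = w) (v : E) :
    M (x + v) - (x + v) = w ↔ v ∈ M.fixedSubspace := by
  rw [mem_fixedSubspace, map_add, add_sub_add_comm, hx, add_eq_left, sub_eq_zero]

section Displacement

variable (c : E) [M.fixedSubspace.HasOrthogonalProjection]

theorem norm_apply_add_sub_sq (x : E) :
    ‖M x + c - x‖ ^ 2 =
      ‖M x - x - (M.fixedSubspace.starProjection c - c)‖ ^ 2 +
        ‖M.fixedSubspace.starProjection c‖ ^ 2 := by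
  set p := M.fixedSubspace.starProjection c
  have hperp : M x - x - (p - c) ∈ M.fixedSubspaceᗮ := by
    rw [sub_sub_eq_add_sub, add_sub_assoc]
    exact add_mem (M.apply_sub_self_mem_orthogonal_fixedSubspace x)
      (M.fixedSubspace.sub_starProjection_mem_orthogonal c)
  have hsplit : M x + c - x = M x - x - (p - c) + p := by abel
  rw [hsplit, norm_add_sq_real,
    Submodule.inner_left_of_mem_orthogonal (M.fixedSubspace.starProjection_apply_mem c) hperp,
    mul_zero, add_zero]

theorem norm_starProjection_le_norm_apply_add_sub (x : E) :
    ‖M.fixedSubspace.starProjection c‖ ≤ ‖M x + c - x‖ := by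
  refine le_of_sq_le_sq ?_ (norm_nonneg _)
  rw [M.norm_apply_add_sub_sq c x]
  exact le_add_of_nonneg_left (sq_nonneg _)

theorem norm_apply_add_sub_eq_iff (x : E) :
    ‖M x + c - x‖ = ‖M.fixedSubspace.starProjection c‖ ↔
      M x - x = M.fixedSubspace.starProjection c - c := by
  rw [← sq_eq_sq₀ (norm_nonneg _) (norm_nonneg _), M.norm_apply_add_sub_sq c x, add_eq_right,
    sq_eq_zero_iff, norm_eq_zero, sub_eq_zero]

end Displacement

theorem exists_apply_sub_self_eq_starProjection_sub [FiniteDimensional ℝ E] (c : E) :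
    ∃ x, M x - x = M.fixedSubspace.starProjection c - c := by
  refine M.exists_apply_sub_self_eq ?_
  rw [← neg_sub]
  exact neg_mem (M.fixedSubspace.sub_starProjection_mem_orthogonal c)

theorem forall_norm_apply_add_sub_le_iff [FiniteDimensional ℝ E] (c x : E) :
    (∀ y, ‖M x + c - x‖ ≤ ‖M y + c - y‖) ↔ M x - x = M.fixedSubspace.starProjection c - c := by
  obtain ⟨x₀, hx₀⟩ := M.exists_apply_sub_self_eq_starProjection_sub c
  rw [← M.norm_apply_add_sub_eq_iff]
  refine ⟨fun h ↦ le_antisymm ?_ (M.norm_starProjection_le_norm_apply_add_sub c x), fun h y ↦ ?_⟩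
  · exact (h x₀).trans ((M.norm_apply_add_sub_eq_iff c x₀).2 hx₀).le
  · exact h.trans_le (M.norm_starProjection_le_norm_apply_add_sub c y)

end LinearIsometryEquiv

/-- Structure of the Min-Set of an affine isometry `f(x) = M x + c` of a
finite-dimensional Euclidean space: with `K = ker (M − id)` and `p` the orthogonal
projection of `c` onto `K`, the set of points minimizing the displacement
`x ↦ ‖f x − x‖` equals `{x | M x − x = p − c}`; it is nonempty, it is an affine
subspace with direction exactly `K`, `f` acts on it as translation by `p`, and `f`
maps it onto itself. -/
theorem affineIsometry_minSet_structure
    {E : Type*} [NormedAddCommGroup E] [InnerProductSpace ℝ E] [FiniteDimensional ℝ E]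
    (M : E ≃ₗᵢ[ℝ] E) (c : E) (f : E → E) (hf : ∀ x, f x = M x + c)
    (K : Submodule ℝ E) (hK : K = LinearMap.ker ((M.toLinearEquiv : E →ₗ[ℝ] E) - LinearMap.id))
    (p : E) (hp : p = (K.orthogonalProjection c : E))
    (minSet : Set E) (hmin : minSet = {x : E | ∀ y : E, ‖f x - x‖ ≤ ‖f y - y‖}) :
    minSet = {x : E | M x - x = p - c} ∧
      minSet.Nonempty ∧
      (∀ x ∈ minSet, ∀ v : E, x + v ∈ minSet ↔ v ∈ K) ∧
      (∀ x ∈ minSet, f x = x + p) ∧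
      f '' minSet = minSet := by
  obtain rfl : f = fun x ↦ M x + c := funext hf
  subst hK hp hmin
  set p := M.fixedSubspace.starProjection c
  set S := {x | M x - x = p - c}
  have hchar : {x | ∀ y, ‖M x + c - x‖ ≤ ‖M y + c - y‖} = S :=
    Set.ext fun x ↦ M.forall_norm_apply_add_sub_le_iff c x
  have hpK : p ∈ M.fixedSubspace := M.fixedSubspace.starProjection_apply_mem c
  have hdir : ∀ x ∈ S, ∀ v, x + v ∈ S ↔ v ∈ M.fixedSubspace :=
    fun x hx ↦ M.apply_add_sub_add_eq_iff hx
  have hact : ∀ x ∈ S, M x + c = x + p := fun x (hx : M x - x = p - c) ↦ by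
    linear_combination (norm := module) hx
  beta_reduce
  rw [hchar]
  refine ⟨rfl, M.exists_apply_sub_self_eq_starProjection_sub c, hdir, hact, ?_⟩
  rw [Set.image_congr hact, Set.image_add_right]
  ext y
  refine ⟨fun hy ↦ ?_, fun hy ↦ (hdir y hy (-p)).2 (neg_mem hpK)⟩
  simpa using (hdir _ hy p).2 hpK
end

section
/- Let n be a natural number, regard ℂⁿ = EuclideanSpace ℂ (Fin n) as a real inner product space via the real part of the Hermitian inner product, and let L be a real-linear subspace of ℂⁿ which is totally real, i.e. if v ∈ L and i • v ∈ L then v = 0. Define f : ℂⁿ → ℝ by f(z) = (infDist(z, L))², the squared Euclidean distance from z to L. Then f is smooth (ContDiff ℝ ⊤), and f is strictly plurisubharmonic in the Hessian sense: for every a ∈ ℂⁿ and every v ∈ ℂⁿ with v ≠ 0, the function t ↦ f(a + t • v) on ℂ has strictly positive Laplacian at 0. -/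
open Complex

open scoped RealInnerProductSpace

/-- The squared Euclidean distance to a totally real (real-linear) subspace `L` of `ℂⁿ`
is smooth and strictly plurisubharmonic. -/
theorem sq_dist_to_totallyReal_strictPsh (n : ℕ)
    (L : Submodule ℝ (EuclideanSpace ℂ (Fin n)))
    (hL : ∀ v ∈ L, Complex.I • v ∈ L → v = 0)
    (f : EuclideanSpace ℂ (Fin n) → ℝ)
    (hf : ∀ z, f z = (Metric.infDist z (L : Set (EuclideanSpace ℂ (Fin n)))) ^ 2) :
    ContDiff ℝ (⊤ : ℕ∞) f ∧
      ∀ a : EuclideanSpace ℂ (Fin n), ∀ v : EuclideanSpace ℂ (Fin n), v ≠ 0 →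
        0 < laplacianAtZero fun t : ℂ => f (a + t • v) := by
  classical
  haveI : FiniteDimensional ℝ (EuclideanSpace ℂ (Fin n)) :=
    Module.Finite.trans ℂ (EuclideanSpace ℂ (Fin n))
  set P :=
    ContinuousLinearMap.id ℝ (EuclideanSpace ℂ (Fin n)) -
      L.subtypeL.comp (Submodule.orthogonalProjection L) with hP
  have hPapp : ∀ z : EuclideanSpace ℂ (Fin n), P z = z - (Submodule.orthogonalProjection L z : EuclideanSpace ℂ (Fin n)) := by
    intro z; simp [hP]
  -- `f z = ‖P z‖ ^ 2`
  have hkey : ∀ z : EuclideanSpace ℂ (Fin n), f z = ‖P z‖ ^ 2 := by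
    intro z
    rw [hf z]
    congr 1
    rw [hPapp, Metric.infDist_eq_iInf, ← Submodule.starProjection_apply, Submodule.starProjection_minimal]
    simp [dist_eq_norm]
  -- membership criterion
  have hker : ∀ z : EuclideanSpace ℂ (Fin n), P z = 0 → z ∈ L := by
    intro z hz
    rw [hPapp, sub_eq_zero] at hz
    rw [hz]; exact Submodule.coe_mem _
  constructor
  · have : f = fun z => ⟪P z, P z⟫ := by
      funext z; rw [hkey z, real_inner_self_eq_norm_sq]
    rw [this]
    exact (P.contDiff).inner ℝ (P.contDiff)
  · intro a v hv
    set A : ℂ →L[ℝ] EuclideanSpace ℂ (Fin n) :=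
      P.comp ((ContinuousLinearMap.toSpanSingleton ℂ v).restrictScalars ℝ) with hA
    have hAapp : ∀ t : ℂ, A t = P (t • v) := fun t => rfl
    set c := P a with hc
    set h : ℂ → ℝ := fun t : ℂ => f (a + t • v) with hh
    have hhy : h = fun t => ⟪c + A t, c + A t⟫ := by
      funext t
      rw [hh]
      simp only [hkey, hAapp, hc]
      rw [← real_inner_self_eq_norm_sq, map_add]
    -- first derivative
    have hy : ∀ t : ℂ, HasFDerivAt (fun s : ℂ => c + A s) A t := fun t =>
      (A.hasFDerivAt).const_add c
    set D : ℂ → (ℂ →L[ℝ] ℝ) := fun t =>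
      (fderivInnerCLM ℝ (c + A t, c + A t)).comp (A.prod A) with hD
    have hD1 : ∀ t : ℂ, HasFDerivAt h (D t) t := by
      intro t
      rw [hhy]
      exact (hy t).inner ℝ (hy t)
    have hfd : fderiv ℝ h = D := funext fun t => (hD1 t).fderiv
    -- second derivative
    set Φ : EuclideanSpace ℂ (Fin n) →L[ℝ] (ℂ →L[ℝ] ℝ) := (2 : ℝ) • ((innerSL ℝ).comp A).flip with hΦ
    have hΦapp : ∀ (y : EuclideanSpace ℂ (Fin n)) (w : ℂ), Φ y w = 2 * ⟪A w, y⟫ := by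
      intro y w
      have hstep : Φ y w = (2 : ℝ) • (((innerSL ℝ).comp A).flip y w) := rfl
      rw [hstep]
      simp only [ContinuousLinearMap.flip_apply, ContinuousLinearMap.comp_apply,
        innerSL_apply_apply, smul_eq_mul]
    have hDΦ : D = fun t => Φ (c + A t) := by
      funext t
      ext w
      rw [hD]
      simp only [ContinuousLinearMap.comp_apply, ContinuousLinearMap.prod_apply,
        fderivInnerCLM_apply, hΦapp]
      rw [real_inner_comm (c + A t) (A w)]
      ring
    have hD2 : HasFDerivAt D (Φ.comp A) 0 := by
      rw [hDΦ]
      exact (Φ.hasFDerivAt).comp 0 (hy 0)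
    have hsecond : ∀ u : ℂ, iteratedFDeriv ℝ 2 h 0 ![u, u] = 2 * ⟪A u, A u⟫ := by
      intro u
      rw [iteratedFDeriv_two_apply]
      simp only [Matrix.cons_val_zero, Matrix.cons_val_one, Matrix.head_cons]
      rw [hfd, hD2.fderiv]
      simp [hΦapp]
    have hlap : laplacianAtZero h = 2 * ‖A 1‖ ^ 2 + 2 * ‖A Complex.I‖ ^ 2 := by
      rw [laplacianAtZero, hsecond 1, hsecond Complex.I,
        real_inner_self_eq_norm_sq, real_inner_self_eq_norm_sq]
    rw [hlap]
    -- positivity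
    have hne : A 1 ≠ 0 ∨ A Complex.I ≠ 0 := by
      by_contra hcon
      push_neg at hcon
      obtain ⟨h1, h2⟩ := hcon
      apply hv
      refine hL v ?_ ?_
      · refine hker v ?_
        have h1' := hAapp 1
        rw [one_smul] at h1'
        rw [← h1']; exact h1
      · refine hker (Complex.I • v) ?_
        rw [← hAapp]; exact h2
    rcases hne with h1 | h2
    · have : 0 < 2 * ‖A 1‖ ^ 2 :=
        mul_pos two_pos (pow_pos (norm_pos_iff.mpr h1) 2)
      have h2' : 0 ≤ 2 * ‖A Complex.I‖ ^ 2 := by positivity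
      linarith
    · have : 0 < 2 * ‖A Complex.I‖ ^ 2 :=
        mul_pos two_pos (pow_pos (norm_pos_iff.mpr h2) 2)
      have h1' : 0 ≤ 2 * ‖A 1‖ ^ 2 := by positivity
      linarith
end

section
/- Let l > 0 and C ≥ 0 be real numbers, let A = {w ∈ ℍ : Re w = 0} be the imaginary axis of the upper half-plane, and consider the set S = {z ∈ ℍ : infDist(z, A) ≤ C and 1 ≤ |z| ≤ e^l}, where infDist is taken with respect to the hyperbolic metric and |z| is the Euclidean modulus of the coordinate of z. Then S is a compact subset of ℍ. (This expresses that the hyperbolic distance to the axis descends to a proper exhaustion function on the quotient of ℍ by the glide reflection z ↦ e^l·(−conj z), whose fundamental domain is the annulus 1 ≤ |z| ≤ e^l.) -/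
/-!
On the imaginary axis, `cosh d(z, it) ≥ ‖z‖ / Im z`, so a point within hyperbolic distance `C` of
the axis with `‖z‖ ≥ 1` has `Im z ≥ 1 / cosh C`. Together with `‖z‖ ≤ e^l` this bounds
`cosh d(z, i) = 1 + ‖z - i‖² / (2 Im z)`, so the (closed) set lies in a closed hyperbolic ball,
which is compact because `ℍ` is a proper metric space.
-/

open UpperHalfPlane Complex

/-- The imaginary axis in the upper half-plane. -/
def imaginaryAxis : Set ℍ := {w : ℍ | w.re = 0}

namespace UpperHalfPlane

theorem isClosed_imaginaryAxis : IsClosed imaginaryAxis :=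
  isClosed_eq continuous_re continuous_const

theorem I_mem_imaginaryAxis : I ∈ imaginaryAxis := by
  simp [imaginaryAxis]

/- For `w = it` one has `cosh d(z, w) = (‖z‖² + t²) / (2 t Im z)`, and `‖z‖² + t² ≥ 2 t ‖z‖`. -/
theorem norm_le_cosh_dist_mul_im {z w : ℍ} (hw : w.re = 0) :
    ‖(z : ℂ)‖ ≤ Real.cosh (dist z w) * z.im := by
  have hz := z.im_pos
  have hw' := w.im_pos
  have hdist : dist (z : ℂ) w ^ 2 = ‖(z : ℂ)‖ ^ 2 - 2 * z.im * w.im + w.im ^ 2 := by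
    rw [Complex.dist_eq, Complex.sq_norm, Complex.sq_norm, Complex.normSq_apply,
      Complex.normSq_apply]
    simp only [sub_re, sub_im, coe_re, coe_im, hw]
    ring
  rw [cosh_dist, hdist]
  field_simp
  nlinarith [sq_nonneg (‖(z : ℂ)‖ - w.im)]

theorem norm_le_cosh_infDist_imaginaryAxis_mul_im (z : ℍ) :
    ‖(z : ℂ)‖ ≤ Real.cosh (Metric.infDist z imaginaryAxis) * z.im := by
  obtain ⟨w, hw, hzw⟩ := isClosed_imaginaryAxis.exists_infDist_eq_dist ⟨I, I_mem_imaginaryAxis⟩ z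
  rw [hzw]
  exact norm_le_cosh_dist_mul_im hw

theorem cosh_dist_I_le (z : ℍ) :
    Real.cosh (dist z I) ≤ 1 + (‖(z : ℂ)‖ + 1) ^ 2 / (2 * z.im) := by
  have hz := z.im_pos
  have hdist : dist (z : ℂ) I ≤ ‖(z : ℂ)‖ + 1 := by
    simpa [Complex.dist_eq] using norm_sub_le (z : ℂ) Complex.I
  rw [cosh_dist, I_im, mul_one]
  gcongr

theorem isCompact_of_isClosed_of_im_ge_of_norm_le {s : Set ℍ} {δ R : ℝ} (hs : IsClosed s)
    (hδ : 0 < δ) (hsub : ∀ z ∈ s, δ ≤ z.im ∧ ‖(z : ℂ)‖ ≤ R) : IsCompact s := by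
  refine (isCompact_closedBall I (Real.arcosh (1 + (R + 1) ^ 2 / (2 * δ)))).of_isClosed_subset
    hs ?_
  intro z hz
  obtain ⟨him, hnorm⟩ := hsub z hz
  have hcosh : Real.cosh (dist z I) ≤ 1 + (R + 1) ^ 2 / (2 * δ) :=
    (cosh_dist_I_le z).trans (by gcongr)
  rw [Metric.mem_closedBall, ← Real.arcosh_cosh dist_nonneg]
  exact (Real.arcosh_le_arcosh (Real.cosh_pos _) (by positivity)).mpr hcosh

end UpperHalfPlane

theorem tube_inter_fundamentalDomain_isCompact_general (l C : ℝ) :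
    IsCompact {z : ℍ | Metric.infDist z imaginaryAxis ≤ C ∧
      1 ≤ ‖(z : ℂ)‖ ∧ ‖(z : ℂ)‖ ≤ Real.exp l} := by
  have hnorm : Continuous fun z : ℍ => ‖(z : ℂ)‖ := continuous_coe.norm
  have hclosed : IsClosed {z : ℍ | Metric.infDist z imaginaryAxis ≤ C ∧
      1 ≤ ‖(z : ℂ)‖ ∧ ‖(z : ℂ)‖ ≤ Real.exp l} :=
    (isClosed_le (Metric.continuous_infDist_pt _) continuous_const).inter
      ((isClosed_le continuous_const hnorm).inter (isClosed_le hnorm continuous_const))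
  refine isCompact_of_isClosed_of_im_ge_of_norm_le (R := Real.exp l) hclosed
    (inv_pos.mpr (Real.cosh_pos C)) ?_
  rintro z ⟨hdist, hone, hle⟩
  refine ⟨(inv_le_iff_one_le_mul₀' (Real.cosh_pos C)).mpr ?_, hle⟩
  have hcosh : Real.cosh (Metric.infDist z imaginaryAxis) ≤ Real.cosh C :=
    Real.cosh_le_cosh.mpr (by
      rw [abs_of_nonneg Metric.infDist_nonneg]; exact hdist.trans (le_abs_self C))
  calc (1 : ℝ) ≤ ‖(z : ℂ)‖ := hone
    _ ≤ Real.cosh (Metric.infDist z imaginaryAxis) * z.im :=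
      norm_le_cosh_infDist_imaginaryAxis_mul_im z
    _ ≤ Real.cosh C * z.im := by gcongr

/-- For `l > 0` and `C ≥ 0`, the set of points of the upper half-plane lying at
hyperbolic distance at most `C` from the imaginary axis and with Euclidean modulus
between `1` and `e^l` (a fundamental domain condition for the glide reflection
`z ↦ e^l·(−conj z)`) is compact. -/
theorem tube_inter_fundamentalDomain_isCompact (l C : ℝ) (hl : 0 < l) (hC : 0 ≤ C) :
    IsCompact {z : ℍ | Metric.infDist z imaginaryAxis ≤ C ∧
      1 ≤ ‖(z : ℂ)‖ ∧ ‖(z : ℂ)‖ ≤ Real.exp l} :=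
  tube_inter_fundamentalDomain_isCompact_general l C
end

section
/- Let A = {w ∈ ℍ : Re w = 0} be the imaginary axis of the upper half-plane. Then for every z ∈ ℍ, the hyperbolic distance from z to A is given by infDist(z, A) = arsinh(|Re z| / Im z), where infDist is taken with respect to the hyperbolic metric of ℍ; in particular this infimum is attained and sinh(infDist(z, A)) = |Re z| / Im z. -/
open UpperHalfPlane Complex

private lemma cosh_inj_aux {a b : ℝ} (ha : 0 ≤ a) (hb : 0 ≤ b)
    (h : Real.cosh a = Real.cosh b) : a = b := by
  have h1 := Real.cosh_le_cosh.1 h.le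
  have h2 := Real.cosh_le_cosh.1 h.ge
  rw [_root_.abs_of_nonneg ha, _root_.abs_of_nonneg hb] at h1 h2
  linarith

private lemma key_cosh (z : ℍ) :
    Real.cosh (Real.arsinh (|z.re| / z.im)) = Real.sqrt (z.re ^ 2 + z.im ^ 2) / z.im := by
  have hy := z.im_pos
  have h : 1 + (|z.re| / z.im) ^ 2 = (z.re ^ 2 + z.im ^ 2) / z.im ^ 2 := by
    rw [div_pow, _root_.sq_abs]; field_simp; ring
  rw [Real.cosh_arsinh, h, Real.sqrt_div (by positivity), Real.sqrt_sq hy.le]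

private lemma foot (z : ℍ) : ∃ a ∈ imaginaryAxis,
    dist z a = Real.arsinh (|z.re| / z.im) := by
  have hy := z.im_pos
  have hr : (0:ℝ) < Real.sqrt (z.re ^ 2 + z.im ^ 2) := by
    apply Real.sqrt_pos.2; positivity
  set r := Real.sqrt (z.re ^ 2 + z.im ^ 2) with hrdef
  refine ⟨⟨⟨0, r⟩, hr⟩, rfl, ?_⟩
  refine cosh_inj_aux dist_nonneg (Real.arsinh_nonneg_iff.2 (by positivity)) ?_
  rw [UpperHalfPlane.cosh_dist', key_cosh]
  have him : UpperHalfPlane.im ⟨⟨0, r⟩, hr⟩ = r := rfl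
  have hre : UpperHalfPlane.re ⟨⟨0, r⟩, hr⟩ = 0 := rfl
  rw [him, hre, sub_zero]
  have hr2 : r ^ 2 = z.re ^ 2 + z.im ^ 2 := Real.sq_sqrt (by positivity)
  rw [hr2]
  rw [eq_div_iff hy.ne', div_mul_eq_mul_div, ← hrdef, div_eq_iff (by positivity)]
  nlinarith [hr2]

private lemma lower_bound (z : ℍ) (w : ℍ) (hw : w ∈ imaginaryAxis) :
    Real.arsinh (|z.re| / z.im) ≤ dist z w := by
  have hy := z.im_pos
  have ht := w.im_pos
  refine le_of_abs_le ?_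
  rw [← _root_.abs_of_nonneg (dist_nonneg (x := z) (y := w)), ← Real.cosh_le_cosh,
    UpperHalfPlane.cosh_dist', key_cosh, hw, sub_zero]
  rw [div_le_div_iff₀ (by positivity) (by positivity)]
  have key : 2 * w.im * Real.sqrt (z.re ^ 2 + z.im ^ 2) ≤ z.re ^ 2 + z.im ^ 2 + w.im ^ 2 := by
    nlinarith [Real.sq_sqrt (show (0:ℝ) ≤ z.re ^ 2 + z.im ^ 2 by positivity),
      sq_nonneg (Real.sqrt (z.re ^ 2 + z.im ^ 2) - w.im),
      Real.sqrt_nonneg (z.re ^ 2 + z.im ^ 2)]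
  nlinarith [key]

/-- The hyperbolic distance from a point `z` of the upper half-plane to the imaginary
axis is `arsinh (|Re z| / Im z)`; the infimum is attained, and
`sinh (infDist z A) = |Re z| / Im z`. -/
theorem infDist_to_imaginaryAxis (z : ℍ) :
    Metric.infDist z imaginaryAxis = Real.arsinh (|z.re| / z.im) ∧
      (∃ a ∈ imaginaryAxis, dist z a = Metric.infDist z imaginaryAxis) ∧
      Real.sinh (Metric.infDist z imaginaryAxis) = |z.re| / z.im := by
  obtain ⟨a, ha, hda⟩ := foot z
  have hinf : Metric.infDist z imaginaryAxis = Real.arsinh (|z.re| / z.im) := by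
    refine le_antisymm (hda ▸ Metric.infDist_le_dist_of_mem ha) ?_
    by_contra h
    push_neg at h
    obtain ⟨w, hw, hdw⟩ := (Metric.infDist_lt_iff ⟨a, ha⟩).1 h
    exact absurd hdw (not_lt.2 (lower_bound z w hw))
  refine ⟨hinf, ⟨a, ha, by rw [hinf, hda]⟩, by
    rw [hinf, Real.sinh_arsinh]⟩
end
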